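/- arXiv:2002.02390 — 6 statements merged into one kernel-verified Lean document; each statement's English description precedes it below -/
import Mathlib

section
/- Let D ⊆ ℝ^d be compact, f : D → ℝ attain its maximum at x* ∈ D and satisfy f(x) ≥ f(x*) − L₀‖x* − x‖ for all x ∈ D, with L₀ > 0. Set ε₀ = L₀ · sup_{x,y ∈ D} ‖x − y‖. Then for every ε ∈ (0, ε₀], the ε/(2L₀)-packing number of the set 𝒳_ε = {x ∈ D : f(x) ≥ f(x*) − ε} satisfies 𝒩(𝒳_ε, ε/(2L₀)) ≤ 9^d (ε₀/ε)^d. -/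
/-- The `r`-packing number of `A`. -/
noncomputable def packingNum {E : Type*} [NormedAddCommGroup E] (A : Set E) (r : ℝ) : ℕ :=
  sSup {k : ℕ | ∃ x : Fin k → E, (∀ i, x i ∈ A) ∧ ∀ i j, i ≠ j → r < ‖x i - x j‖}

/-- If `f` attains its maximum at `x* ∈ D` (`D ⊆ ℝ^d` compact) and is `L₀`-Lipschitz
around `x*`, then with `ε₀ = L₀ · sup_{x,y∈D} ‖x−y‖`, for every `ε ∈ (0, ε₀]` the set of
`ε`-optimal points satisfies `𝒩(𝒳_ε, ε/(2L₀)) ≤ 9^d (ε₀/ε)^d`. -/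
theorem packingNum_near_optimal_le
    {E : Type*} [NormedAddCommGroup E] [NormedSpace ℝ E] [FiniteDimensional ℝ E]
    (d : ℕ) (hd : Module.finrank ℝ E = d)
    (D : Set E) (hD : IsCompact D)
    (f : E → ℝ) (xstar : E) (hxstar : xstar ∈ D)
    (hmax : ∀ x ∈ D, f x ≤ f xstar)
    (L₀ : ℝ) (hL₀ : 0 < L₀)
    (hlip : ∀ x ∈ D, f xstar - L₀ * ‖xstar - x‖ ≤ f x)
    (ε₀ : ℝ) (hε₀ : ε₀ = L₀ * Metric.diam D)
    (ε : ℝ) (hε : ε ∈ Set.Ioc 0 ε₀) :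
    (packingNum {x | x ∈ D ∧ f xstar - ε ≤ f x} (ε / (2 * L₀)) : ℝ)
      ≤ 9 ^ d * (ε₀ / ε) ^ d := by
  obtain ⟨hε1, hε2⟩ := hε
  have hε₀pos : 0 < ε₀ := lt_of_lt_of_le hε1 hε2
  set r : ℝ := ε / (2 * L₀) with hr
  have hrpos : 0 < r := by positivity
  set ρ : ℝ := r / 2 with hρdef
  have hρpos : 0 < ρ := by positivity
  set R : ℝ := Metric.diam D with hRdef
  have hRnn : 0 ≤ R := Metric.diam_nonneg
  borelize E
  set μ : MeasureTheory.Measure E := MeasureTheory.Measure.addHaar with hμ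
  set c : ENNReal := μ (Metric.ball (0 : E) 1) with hc
  have hc0 : c ≠ 0 := (Metric.measure_ball_pos μ 0 one_pos).ne'
  have hctop : c ≠ ⊤ := MeasureTheory.measure_ball_lt_top.ne
  set B : ℝ := 9 ^ d * (ε₀ / ε) ^ d with hB
  have hBnn : 0 ≤ B := by positivity
  have hkey : ∀ k ∈ {k : ℕ | ∃ x : Fin k → E,
      (∀ i, x i ∈ {x | x ∈ D ∧ f xstar - ε ≤ f x}) ∧ ∀ i j, i ≠ j → r < ‖x i - x j‖},
      (k : ℝ) ≤ B := by
    rintro k ⟨x, hxA, hsep⟩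
    rcases subsingleton_or_nontrivial E with hE | hE
    · -- trivial space: at most one point can be packed
      have hk1 : k ≤ 1 := by
        by_contra h
        push_neg at h
        have h01 : (⟨0, by omega⟩ : Fin k) ≠ ⟨1, by omega⟩ := by simp [Fin.ext_iff]
        have hs := hsep _ _ h01
        rw [Subsingleton.elim (x ⟨0, by omega⟩) (x ⟨1, by omega⟩), sub_self, norm_zero] at hs
        linarith
      have hB1 : (1 : ℝ) ≤ B := by
        have h1 : (1 : ℝ) ≤ ε₀ / ε := (one_le_div hε1).mpr hε2
        have h2 : (1 : ℝ) ≤ (ε₀ / ε) ^ d := one_le_pow₀ h1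
        have h3 : (1 : ℝ) ≤ (9 : ℝ) ^ d := one_le_pow₀ (by norm_num)
        calc (1 : ℝ) ≤ (9 : ℝ) ^ d * 1 := by linarith
          _ ≤ (9 : ℝ) ^ d * (ε₀ / ε) ^ d := by nlinarith
          _ = B := rfl
      calc (k : ℝ) ≤ 1 := by exact_mod_cast hk1
        _ ≤ B := hB1
    -- the balls of radius ρ around the points are pairwise disjoint
    have hdisj : Pairwise (Function.onFun Disjoint (fun i => Metric.ball (x i) ρ)) := by
      intro i j hij
      apply Metric.ball_disjoint_ball
      have := hsep i j hij
      have hdist : dist (x i) (x j) = ‖x i - x j‖ := by rw [dist_eq_norm]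
      rw [hdist]
      have : ρ + ρ = r := by rw [hρdef]; ring
      linarith
    -- they are all contained in a ball around xstar
    have hsub : ∀ i, Metric.ball (x i) ρ ⊆ Metric.ball xstar (R + ρ) := by
      intro i y hy
      have h1 : dist (x i) xstar ≤ R := Metric.dist_le_diam_of_mem hD.isBounded (hxA i).1 hxstar
      have h2 : dist y (x i) < ρ := Metric.mem_ball.mp hy
      have : dist y xstar ≤ dist y (x i) + dist (x i) xstar := dist_triangle _ _ _
      exact Metric.mem_ball.mpr (by linarith)
    have h1 : ∑' i : Fin k, μ (Metric.ball (x i) ρ) ≤ μ (Metric.ball xstar (R + ρ)) := by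
      rw [← MeasureTheory.measure_iUnion hdisj (fun i => Metric.isOpen_ball.measurableSet)]
      exact MeasureTheory.measure_mono (Set.iUnion_subset hsub)
    have hballx : ∀ y : E, μ (Metric.ball y ρ) = ENNReal.ofReal (ρ ^ d) * c := by
      intro y
      rw [hc, MeasureTheory.Measure.addHaar_ball μ y hρpos.le, hd]
    have hbigball : μ (Metric.ball xstar (R + ρ)) = ENNReal.ofReal ((R + ρ) ^ d) * c := by
      rw [hc, MeasureTheory.Measure.addHaar_ball μ xstar (by positivity), hd]
    rw [hbigball] at h1
    have hsum : ∑' i : Fin k, μ (Metric.ball (x i) ρ)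
        = (k : ENNReal) * (ENNReal.ofReal (ρ ^ d) * c) := by
      simp [hballx, tsum_fintype, Finset.sum_const, Finset.card_univ, nsmul_eq_mul]
    rw [hsum] at h1
    rw [← mul_assoc] at h1
    have h2 : (k : ENNReal) * ENNReal.ofReal (ρ ^ d) ≤ ENNReal.ofReal ((R + ρ) ^ d) :=
      (ENNReal.mul_le_mul_iff_left hc0 hctop).mp h1
    have h3 : (k : ℝ) * ρ ^ d ≤ (R + ρ) ^ d := by
      rw [← ENNReal.ofReal_natCast k, ← ENNReal.ofReal_mul (by positivity)] at h2
      exact (ENNReal.ofReal_le_ofReal_iff (by positivity)).mp h2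
    -- now the real computation
    have hρeq : ρ = ε / (4 * L₀) := by rw [hρdef, hr]; ring
    have hkey2 : R + ρ ≤ 9 * (ε₀ / ε) * ρ := by
      have hReq : R = ε₀ / L₀ := by
        rw [hε₀, mul_div_cancel_left₀ _ hL₀.ne']
      have h9 : 9 * (ε₀ / ε) * (ε / (4 * L₀)) = 9 * ε₀ / (4 * L₀) := by
        field_simp
      rw [hReq, hρeq, h9,
        div_add_div _ _ hL₀.ne' (by positivity : (4 : ℝ) * L₀ ≠ 0),
        div_le_div_iff₀ (by positivity) (by positivity)]
      nlinarith [mul_pos hL₀ hL₀, hε2]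
    have hpow : (R + ρ) ^ d ≤ (9 * (ε₀ / ε)) ^ d * ρ ^ d := by
      calc (R + ρ) ^ d ≤ (9 * (ε₀ / ε) * ρ) ^ d := pow_le_pow_left₀ (by positivity) hkey2 d
        _ = (9 * (ε₀ / ε)) ^ d * ρ ^ d := by rw [mul_pow]
    have h4 : (k : ℝ) * ρ ^ d ≤ (9 * (ε₀ / ε)) ^ d * ρ ^ d := le_trans h3 hpow
    have h5 : (k : ℝ) ≤ (9 * (ε₀ / ε)) ^ d :=
      le_of_mul_le_mul_right h4 (pow_pos hρpos d)
    calc (k : ℝ) ≤ (9 * (ε₀ / ε)) ^ d := h5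
      _ = B := by rw [hB, mul_pow]
  -- conclude about the sSup
  have hne : (0 : ℕ) ∈ {k : ℕ | ∃ x : Fin k → E,
      (∀ i, x i ∈ {x | x ∈ D ∧ f xstar - ε ≤ f x}) ∧ ∀ i j, i ≠ j → r < ‖x i - x j‖} :=
    ⟨Fin.elim0, fun i => i.elim0, fun i => i.elim0⟩
  have hfloor : packingNum {x | x ∈ D ∧ f xstar - ε ≤ f x} r ≤ ⌊B⌋₊ := by
    apply csSup_le ⟨0, hne⟩
    intro k hk
    exact Nat.le_floor (hkey k hk)
  calc (packingNum {x | x ∈ D ∧ f xstar - ε ≤ f x} r : ℝ) ≤ (⌊B⌋₊ : ℝ) := by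
        exact_mod_cast hfloor
    _ ≤ B := Nat.floor_le hBnn
end

section
/- Let D ⊆ ℝ^d be compact, a ∈ D, β > 0, and f(x) = 1 − β‖x − a‖₂² with the Euclidean norm. Set α = sup_{x∈D} ‖x − a‖₂, L₀ = 2αβ, and ε₀ = L₀ · sup_{x,y∈D} ‖x − y‖₂. Then for all ε ∈ (0, ε₀], the ε/(2L₀)-packing number of 𝒳_ε = {x ∈ D : ‖x − a‖₂ ≤ √(ε/β)} satisfies 𝒩(𝒳_ε, ε/(2L₀)) ≤ (1 + 8√2)^d (ε₀/ε)^{d/2}. -/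
open MeasureTheory Metric ENNReal in
/-- Volume argument: points in a ball of radius `R` pairwise separated by more than `r`
number at most `((2R+r)/r)^d`. -/
lemma card_le_vol_pack (d k : ℕ) (c : EuclideanSpace ℝ (Fin d)) (R r : ℝ)
    (hR : 0 ≤ R) (hr : 0 < r)
    (x : Fin k → EuclideanSpace ℝ (Fin d)) (hx : ∀ i, ‖x i - c‖ ≤ R)
    (hsep : ∀ i j, i ≠ j → r < ‖x i - x j‖) :
    (k : ℝ) ≤ ((2 * R + r) / r) ^ d := by
  set μ := (volume : Measure (EuclideanSpace ℝ (Fin d))) with hμ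
  have hn : Module.finrank ℝ (EuclideanSpace ℝ (Fin d)) = d := finrank_euclideanSpace_fin
  have hdisj : Pairwise (Function.onFun Disjoint fun i => ball (x i) (r / 2)) := by
    intro i j hij
    apply ball_disjoint_ball
    rw [dist_eq_norm]
    linarith [hsep i j hij]
  have hsub : (⋃ i, ball (x i) (r / 2)) ⊆ ball c (R + r / 2) := by
    rintro y hy
    rw [Set.mem_iUnion] at hy
    obtain ⟨i, hi⟩ := hy
    rw [mem_ball] at *
    have h1 : dist (x i) c ≤ R := by rw [dist_eq_norm]; exact hx i
    have h2 := dist_triangle y (x i) c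
    linarith
  have hmeas := measure_iUnion (μ := μ) hdisj (fun i => measurableSet_ball)
  have hle : μ (⋃ i, ball (x i) (r / 2)) ≤ μ (ball c (R + r / 2)) := measure_mono hsub
  rw [hmeas] at hle
  have hball : ∀ i, μ (ball (x i) (r / 2))
      = ENNReal.ofReal ((r / 2) ^ d) * μ (ball 0 1) := by
    intro i
    rw [Measure.addHaar_ball_of_pos μ (x i) (by linarith : (0:ℝ) < r / 2), hn]
  have hbig : μ (ball c (R + r / 2))
      = ENNReal.ofReal ((R + r / 2) ^ d) * μ (ball 0 1) := by
    rw [Measure.addHaar_ball_of_pos μ c (by linarith : (0:ℝ) < R + r / 2), hn]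
  rw [tsum_fintype] at hle
  simp only [hball, hbig, Finset.sum_const, Finset.card_univ, Fintype.card_fin,
    nsmul_eq_mul] at hle
  rw [← mul_assoc] at hle
  have hv0 : μ (ball (0 : EuclideanSpace ℝ (Fin d)) 1) ≠ 0 :=
    (measure_ball_pos μ 0 one_pos).ne'
  have hvt : μ (ball (0 : EuclideanSpace ℝ (Fin d)) 1) ≠ ⊤ := measure_ball_lt_top.ne
  have hle2 : (k : ℝ≥0∞) * ENNReal.ofReal ((r / 2) ^ d)
      ≤ ENNReal.ofReal ((R + r / 2) ^ d) :=
    (ENNReal.mul_le_mul_iff_left hv0 hvt).mp hle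
  have hreal : (k : ℝ) * (r / 2) ^ d ≤ (R + r / 2) ^ d := by
    rw [show ((k : ℝ≥0∞)) = ENNReal.ofReal (k : ℝ) by simp,
      ← ENNReal.ofReal_mul (by positivity)] at hle2
    exact (ENNReal.ofReal_le_ofReal_iff (by positivity)).mp hle2
  have hhalf : (0:ℝ) < r / 2 := by linarith
  have heq : (2 * R + r) / r = (R + r / 2) / (r / 2) := by
    field_simp
  rw [heq, div_pow, le_div_iff₀ (pow_pos hhalf d)]
  exact hreal

/-- Quadratic regime: for `f(x) = 1 − β‖x − a‖₂²` on a compact `D ⊆ ℝ^d` (Euclidean norm),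
with `α = sup_{x∈D}‖x − a‖₂`, `L₀ = 2αβ`, `ε₀ = L₀ · sup_{x,y∈D}‖x − y‖₂`, for all
`ε ∈ (0, ε₀]`: `𝒩(𝒳_ε, ε/(2L₀)) ≤ (1 + 8√2)^d (ε₀/ε)^{d/2}`. -/
theorem packingNum_quadratic_regime
    (d : ℕ) (D : Set (EuclideanSpace ℝ (Fin d))) (hD : IsCompact D)
    (hDne : D.Nonempty)
    (a : EuclideanSpace ℝ (Fin d)) (ha : a ∈ D) (β : ℝ) (hβ : 0 < β)
    (f : EuclideanSpace ℝ (Fin d) → ℝ) (hf : ∀ x, f x = 1 - β * ‖x - a‖ ^ 2)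
    (α : ℝ) (hα : α = sSup ((fun x => ‖x - a‖) '' D)) (hαpos : 0 < α)
    (L₀ : ℝ) (hL₀ : L₀ = 2 * α * β)
    (ε₀ : ℝ) (hε₀ : ε₀ = L₀ * Metric.diam D)
    (ε : ℝ) (hε : ε ∈ Set.Ioc 0 ε₀) :
    (packingNum {x | x ∈ D ∧ ‖x - a‖ ≤ Real.sqrt (ε / β)} (ε / (2 * L₀)) : ℝ)
      ≤ (1 + 8 * Real.sqrt 2) ^ d * (ε₀ / ε) ^ ((d : ℝ) / 2) := by
  obtain ⟨hε0, hεε₀⟩ := hε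
  have hL₀pos : 0 < L₀ := by rw [hL₀]; positivity
  have hrpos : 0 < ε / (2 * L₀) := by positivity
  have hε₀pos : 0 < ε₀ := lt_of_lt_of_le hε0 hεε₀
  have hαdiam : α ≤ Metric.diam D := by
    rw [hα]
    apply Real.sSup_le _ Metric.diam_nonneg
    rintro _ ⟨y, hyD, rfl⟩
    show ‖y - a‖ ≤ Metric.diam D
    rw [← dist_eq_norm]
    exact Metric.dist_le_diam_of_mem hD.isBounded hyD ha
  have hε₀ge : 2 * α ^ 2 * β ≤ ε₀ := by
    rw [hε₀, hL₀]
    nlinarith [hβ.le, hαpos.le]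
  set R := Real.sqrt (ε / β) with hRdef
  set t := Real.sqrt (ε₀ / ε) with htdef
  set s := Real.sqrt 2 with hsdef
  have ht1 : 1 ≤ t := by
    rw [htdef]
    rw [show (1:ℝ) = Real.sqrt 1 by simp]
    exact Real.sqrt_le_sqrt ((one_le_div hε0).mpr hεε₀)
  have ht2 : t ^ 2 = ε₀ / ε := Real.sq_sqrt (by positivity)
  have hR2 : R ^ 2 = ε / β := Real.sq_sqrt (by positivity)
  have hs2 : s ^ 2 = 2 := Real.sq_sqrt (by norm_num)
  have hsnn : (0:ℝ) ≤ s := Real.sqrt_nonneg 2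
  have hRnn : (0:ℝ) ≤ R := Real.sqrt_nonneg _
  have htnn : (0:ℝ) ≤ t := Real.sqrt_nonneg _
  have key : 2 * R / (ε / (2 * L₀)) ≤ 4 * s * t := by
    have hrw : ε / (2 * L₀) = ε / (4 * α * β) := by rw [hL₀]; ring_nf
    rw [hrw, div_div_eq_mul_div, div_le_iff₀ hε0]
    have hβR : β * R ^ 2 = ε := by rw [hR2]; field_simp
    have htε : t ^ 2 * ε = ε₀ := by rw [ht2]; field_simp
    have ha' : (0:ℝ) ≤ 2 * R * (4 * α * β) := by positivity
    have hb' : (0:ℝ) ≤ 4 * s * t * ε := by positivity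
    have hsq : (2 * R * (4 * α * β)) ^ 2 ≤ (4 * s * t * ε) ^ 2 := by
      have e1 : (2 * R * (4 * α * β)) ^ 2 = 64 * α ^ 2 * (β * (β * R ^ 2)) := by ring
      have e2 : (4 * s * t * ε) ^ 2 = 16 * s ^ 2 * (t ^ 2 * ε * ε) := by ring
      rw [e1, e2, hβR, htε, hs2]
      nlinarith [mul_le_mul_of_nonneg_right hε₀ge hε0.le]
    have := Real.sqrt_le_sqrt hsq
    rwa [Real.sqrt_sq ha', Real.sqrt_sq hb'] at this
  have key2 : ((2 * R + ε / (2 * L₀)) / (ε / (2 * L₀))) ^ d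
      ≤ (1 + 8 * s) ^ d * (ε₀ / ε) ^ ((d : ℝ) / 2) := by
    have h1 : (2 * R + ε / (2 * L₀)) / (ε / (2 * L₀)) = 2 * R / (ε / (2 * L₀)) + 1 := by
      field_simp
    have h2 : 2 * R / (ε / (2 * L₀)) + 1 ≤ (1 + 8 * s) * t := by
      nlinarith [mul_nonneg hsnn htnn]
    have htd : t ^ d = (ε₀ / ε) ^ ((d : ℝ) / 2) := by
      have hx : (0:ℝ) ≤ ε₀ / ε := by positivity
      rw [htdef, Real.sqrt_eq_rpow, ← Real.rpow_natCast ((ε₀ / ε) ^ ((1:ℝ)/2)) d,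
        ← Real.rpow_mul hx]
      congr 1
      ring
    calc ((2 * R + ε / (2 * L₀)) / (ε / (2 * L₀))) ^ d
        ≤ ((1 + 8 * s) * t) ^ d := by
          apply pow_le_pow_left₀ (by rw [h1]; positivity) (by rw [h1]; exact h2)
      _ = (1 + 8 * s) ^ d * t ^ d := mul_pow _ _ _
      _ = (1 + 8 * s) ^ d * (ε₀ / ε) ^ ((d : ℝ) / 2) := by rw [htd]
  set RHS := (1 + 8 * s) ^ d * (ε₀ / ε) ^ ((d : ℝ) / 2) with hRHS
  have hRHSnn : 0 ≤ RHS := by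
    rw [hRHS]
    positivity
  have hbound : ∀ k ∈ {k : ℕ | ∃ x : Fin k → EuclideanSpace ℝ (Fin d),
      (∀ i, x i ∈ {x | x ∈ D ∧ ‖x - a‖ ≤ Real.sqrt (ε / β)}) ∧
      ∀ i j, i ≠ j → ε / (2 * L₀) < ‖x i - x j‖}, (k : ℝ) ≤ RHS := by
    rintro k ⟨x, hxmem, hxsep⟩
    refine le_trans (card_le_vol_pack d k a R (ε / (2 * L₀)) hRnn hrpos x
      (fun i => (hxmem i).2) hxsep) key2
  have hfloor : packingNum {x | x ∈ D ∧ ‖x - a‖ ≤ Real.sqrt (ε / β)} (ε / (2 * L₀))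
      ≤ ⌊RHS⌋₊ := by
    apply csSup_le'
    intro k hk
    exact Nat.le_floor (hbound k hk)
  calc (packingNum {x | x ∈ D ∧ ‖x - a‖ ≤ Real.sqrt (ε / β)} (ε / (2 * L₀)) : ℝ)
      ≤ (⌊RHS⌋₊ : ℝ) := Nat.cast_le.mpr hfloor
    _ ≤ RHS := Nat.floor_le hRHSnn
end

section
/- Under the Piyavskii–Shubert algorithm (each x_{j} for j ≥ 2 satisfies f̂_{j−1}(x_j) ≥ sup_{x∈D} f̂_{j−1}(x) − α), if the i-th query point x_i is Δ-suboptimal, i.e., f(x*) − f(x_i) > Δ for some Δ > 0, then every subsequent query point x_j with j > i satisfies ‖x_j − x_i‖ > (Δ − 3α)/L₁. -/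
/-- The Piyavskii–Shubert proxy function after `k` observations:
`f̂_k(y) = min_{1 ≤ i ≤ k} { f(x_i) + ξ_i + L₁‖x_i − y‖ + α }`. -/
noncomputable def fhat {E : Type*} [NormedAddCommGroup E]
    (f : E → ℝ) (x : ℕ → E) (ξ : ℕ → ℝ) (L₁ α : ℝ) (k : ℕ) (y : E) : ℝ :=
  ⨅ i : (Finset.Icc 1 k : Finset ℕ), (f (x i) + ξ i + L₁ * ‖x i - y‖ + α)

/-- If the `i`-th query point of the Piyavskii–Shubert algorithm is `Δ`-suboptimal
(`f(x*) − f(x_i) > Δ`), then every subsequent query point `x_j` (`i < j ≤ n`) satisfies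
`‖x_j − x_i‖ > (Δ − 3α)/L₁`. -/
theorem dist_gt_of_suboptimal
    {E : Type*} [NormedAddCommGroup E] [NormedSpace ℝ E]
    (D : Set E) (hD : IsCompact D)
    (f : E → ℝ) (xstar : E) (hxstar : xstar ∈ D)
    (hmax : ∀ z ∈ D, f z ≤ f xstar)
    (L₀ L₁ : ℝ) (hL₀ : 0 < L₀) (hL₁ : L₀ ≤ L₁)
    (hlip : ∀ z ∈ D, f xstar - L₀ * ‖xstar - z‖ ≤ f z)
    (α : ℝ) (hα : 0 ≤ α)
    (n : ℕ) (x : ℕ → E) (ξ : ℕ → ℝ)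
    (hx : ∀ k, x k ∈ D) (hξ : ∀ k, |ξ k| ≤ α)
    (hsel : ∀ k, 1 ≤ k → k < n →
      sSup ((fun y => fhat f x ξ L₁ α k y) '' D) - α ≤ fhat f x ξ L₁ α k (x (k + 1)))
    (Δ : ℝ) (hΔ : 0 < Δ)
    (i j : ℕ) (hi : 1 ≤ i) (hij : i < j) (hj : j ≤ n)
    (hsub : Δ < f xstar - f (x i)) :
    (Δ - 3 * α) / L₁ < ‖x j - x i‖ := by
  have hL1pos : 0 < L₁ := lt_of_lt_of_le hL₀ hL₁
  set k := j - 1 with hk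
  have hjk : j = k + 1 := by omega
  have hik : i ≤ k := by omega
  have hk1 : 1 ≤ k := le_trans hi hik
  have hkn : k < n := by omega
  haveI hne : Nonempty (Finset.Icc 1 k : Finset ℕ) :=
    ⟨⟨i, by simp [Finset.mem_Icc]; omega⟩⟩
  -- upper bound on fhat at index i
  have hA : ∀ y : E, fhat f x ξ L₁ α k y ≤ f (x i) + ξ i + L₁ * ‖x i - y‖ + α := by
    intro y
    exact ciInf_le (Set.Finite.bddBelow (Set.finite_range _))
      (⟨i, by simp [Finset.mem_Icc]; omega⟩ : (Finset.Icc 1 k : Finset ℕ))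
  -- lower bound: fhat k xstar ≥ f xstar
  have hB : f xstar ≤ fhat f x ξ L₁ α k xstar := by
    apply le_ciInf
    rintro ⟨m, hm⟩
    have h1 : f xstar - L₀ * ‖xstar - x m‖ ≤ f (x m) := hlip _ (hx m)
    have h2 : -α ≤ ξ m := neg_le_of_abs_le (hξ m)
    have h3 : ‖xstar - x m‖ = ‖x m - xstar‖ := norm_sub_rev _ _
    have h4 : L₀ * ‖x m - xstar‖ ≤ L₁ * ‖x m - xstar‖ :=
      mul_le_mul_of_nonneg_right hL₁ (norm_nonneg _)
    simp only
    rw [h3] at h1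
    linarith
  -- bounded above on D
  obtain ⟨R, hR⟩ := (hD.isBounded).exists_norm_le
  have hBdd : BddAbove ((fun y => fhat f x ξ L₁ α k y) '' D) := by
    refine ⟨f (x 1) + ξ 1 + L₁ * (‖x 1‖ + R) + α, ?_⟩
    rintro _ ⟨y, hy, rfl⟩
    have h1 : fhat f x ξ L₁ α k y ≤ f (x 1) + ξ 1 + L₁ * ‖x 1 - y‖ + α :=
      ciInf_le (Set.Finite.bddBelow (Set.finite_range _))
        (⟨1, by simp [Finset.mem_Icc]; omega⟩ : (Finset.Icc 1 k : Finset ℕ))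
    have h2 : ‖x 1 - y‖ ≤ ‖x 1‖ + R := by
      calc ‖x 1 - y‖ ≤ ‖x 1‖ + ‖y‖ := norm_sub_le _ _
        _ ≤ ‖x 1‖ + R := by linarith [hR y hy]
    have h3 : L₁ * ‖x 1 - y‖ ≤ L₁ * (‖x 1‖ + R) :=
      mul_le_mul_of_nonneg_left h2 hL1pos.le
    linarith
  have hC : fhat f x ξ L₁ α k xstar ≤ sSup ((fun y => fhat f x ξ L₁ α k y) '' D) :=
    le_csSup hBdd ⟨xstar, hxstar, rfl⟩
  have hsel' := hsel k hk1 hkn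
  rw [← hjk] at hsel'
  have hAj := hA (x j)
  have hnormrev : ‖x i - x j‖ = ‖x j - x i‖ := norm_sub_rev _ _
  have hξi : ξ i ≤ α := le_of_abs_le (hξ i)
  rw [div_lt_iff₀ hL1pos]
  rw [hnormrev] at hAj
  nlinarith [hB, hC, hsel', hAj]
end

section
/- Assume f : D → ℝ (D ⊆ ℝ^d compact) is L₀-Lipschitz around a maximizer x*, L₁ ≥ L₀, ε₀ = L₀ sup_{x,y∈D}‖x−y‖, ε ∈ (0, ε₀), and the perturbations ξ_k satisfy |ξ_k| ≤ α with α ∈ [0, ε/6). Run the Piyavskii–Shubert algorithm for n rounds with the proxy f̂_k(x) = min_{i≤k}{f(x_i)+ξ_i+L₁‖x_i − x‖+α} and α-approximate maximization, and output x*_n = x_{argmax_i (f(x_i)+ξ_i)}. If n ≥ ñ := 1 + Σ_{s=0}^{⌈log₂(ε₀/ε)⌉−1} 𝒩( 𝒳_{(ε₀2^{−s−1}, ε₀2^{−s}]}, (ε₀2^{−s−1} − 3α)/L₁ ), then the simple regret satisfies f(x*) − f(x*_n) ≤ ε + 2α. -/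
lemma pack_bdd {E : Type*} [NormedAddCommGroup E] {D A : Set E} (hD : IsCompact D)
    (hA : A ⊆ D) {r : ℝ} (hr : 0 < r) :
    BddAbove {k : ℕ | ∃ x : Fin k → E, (∀ i, x i ∈ A) ∧ ∀ i j, i ≠ j → r < ‖x i - x j‖} := by
  obtain ⟨t, htf, hcov⟩ := (Metric.totallyBounded_iff.1 hD.totallyBounded) (r/2) (by linarith)
  refine ⟨htf.toFinset.card, fun k hk => ?_⟩
  obtain ⟨p, hmem, hsep⟩ := hk
  by_contra hkc
  push_neg at hkc
  have hball : ∀ i : Fin k, ∃ c ∈ htf.toFinset, p i ∈ Metric.ball c (r/2) := by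
    intro i
    have := hcov (hA (hmem i))
    simp only [Set.mem_iUnion] at this
    obtain ⟨c, hc, hc2⟩ := this
    exact ⟨c, htf.mem_toFinset.2 hc, hc2⟩
  choose c hc hc2 using hball
  have hmap : ∀ i ∈ (Finset.univ : Finset (Fin k)), c i ∈ htf.toFinset := fun i _ => hc i
  have hcard : htf.toFinset.card < (Finset.univ : Finset (Fin k)).card := by simpa using hkc
  obtain ⟨i, _, j, _, hij, hcij⟩ :=
    Finset.exists_ne_map_eq_of_card_lt_of_maps_to hcard hmap
  have h1 : dist (p i) (p j) < r := by
    have hi2 := Metric.mem_ball.1 (hc2 i)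
    have hj2 := Metric.mem_ball.1 (hc2 j)
    rw [hcij] at hi2
    linarith [dist_triangle (p i) (c j) (p j), dist_comm (c j) (p j)]
  have h2 : r < dist (p i) (p j) := by rw [dist_eq_norm]; exact hsep i j hij
  linarith

lemma fhat_le {E : Type*} [NormedAddCommGroup E]
    (f : E → ℝ) (x : ℕ → E) (ξ : ℕ → ℝ) (L₁ α : ℝ) {k i : ℕ}
    (hi : i ∈ Finset.Icc 1 k) (y : E) :
    fhat f x ξ L₁ α k y ≤ f (x i) + ξ i + L₁ * ‖x i - y‖ + α :=
  ciInf_le (Set.Finite.bddBelow (Set.finite_range _)) (⟨i, hi⟩ : (Finset.Icc 1 k : Finset ℕ))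

lemma le_fhat {E : Type*} [NormedAddCommGroup E]
    (f : E → ℝ) (x : ℕ → E) (ξ : ℕ → ℝ) (L₁ α : ℝ) {k : ℕ} (hk : 1 ≤ k) {a : ℝ} (y : E)
    (h : ∀ i ∈ Finset.Icc 1 k, a ≤ f (x i) + ξ i + L₁ * ‖x i - y‖ + α) :
    a ≤ fhat f x ξ L₁ α k y :=
  haveI : Nonempty (Finset.Icc 1 k : Finset ℕ) := ⟨⟨1, by simp [hk]⟩⟩
  le_ciInf fun i => h i i.2

/-- Sample complexity of the Piyavskii–Shubert algorithm with bounded deterministic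
perturbations: if the number of queries `n` is at least
`ñ = 1 + Σ_{s=0}^{⌈log₂(ε₀/ε)⌉−1} 𝒩(𝒳_{(ε₀2^{−s−1}, ε₀2^{−s}]}, (ε₀2^{−s−1} − 3α)/L₁)`,
then the simple regret of the returned point satisfies `f(x*) − f(x*_n) ≤ ε + 2α`. -/
theorem piyavskii_sample_complexity
    {E : Type*} [NormedAddCommGroup E] [NormedSpace ℝ E]
    (D : Set E) (hD : IsCompact D)
    (f : E → ℝ) (xstar : E) (hxstar : xstar ∈ D)
    (hmax : ∀ z ∈ D, f z ≤ f xstar)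
    (L₀ L₁ : ℝ) (hL₀ : 0 < L₀) (hL₁ : L₀ ≤ L₁)
    (hlip : ∀ z ∈ D, f xstar - L₀ * ‖xstar - z‖ ≤ f z)
    (ε₀ : ℝ) (hε₀ : ε₀ = L₀ * Metric.diam D)
    (ε α : ℝ) (hε : ε ∈ Set.Ioo 0 ε₀) (hα : 0 ≤ α) (hαε : α < ε / 6)
    (n : ℕ) (x : ℕ → E) (ξ : ℕ → ℝ)
    (hx : ∀ k, x k ∈ D) (hξ : ∀ k, |ξ k| ≤ α)
    (hsel : ∀ k, 1 ≤ k → k < n →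
      sSup ((fun y => fhat f x ξ L₁ α k y) '' D) - α ≤ fhat f x ξ L₁ α k (x (k + 1)))
    (istar : ℕ) (histar : istar ∈ Finset.Icc 1 n)
    (hargmax : ∀ i ∈ Finset.Icc 1 n, f (x i) + ξ i ≤ f (x istar) + ξ istar)
    (hn : 1 + ∑ s ∈ Finset.range (⌈Real.logb 2 (ε₀ / ε)⌉.toNat),
        packingNum
          {z | z ∈ D ∧ ε₀ / 2 ^ (s + 1) < f xstar - f z ∧ f xstar - f z ≤ ε₀ / 2 ^ s}
          ((ε₀ / 2 ^ (s + 1) - 3 * α) / L₁) ≤ n) :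
    f xstar - f (x istar) ≤ ε + 2 * α := by
  classical
  obtain ⟨hεpos, hεlt⟩ := hε
  have hL₁pos : 0 < L₁ := lt_of_lt_of_le hL₀ hL₁
  have hε₀pos : 0 < ε₀ := lt_trans hεpos hεlt
  set S := (⌈Real.logb 2 (ε₀ / ε)⌉).toNat with hS
  have hratio : 1 < ε₀ / ε := (one_lt_div hεpos).2 hεlt
  have hlogpos : 0 < Real.logb 2 (ε₀ / ε) := Real.logb_pos (by norm_num) hratio
  have hceilpos : 0 < ⌈Real.logb 2 (ε₀ / ε)⌉ := Int.ceil_pos.2 hlogpos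
  have hSpos : 0 < S := by omega
  have hSZ : ((S : ℤ) : ℝ) = (⌈Real.logb 2 (ε₀ / ε)⌉ : ℝ) := by
    rw [hS, Int.toNat_of_nonneg hceilpos.le]
  have hScast : (S : ℝ) = (⌈Real.logb 2 (ε₀ / ε)⌉ : ℝ) := by exact_mod_cast hSZ
  have h2S_ge : ε₀ / ε ≤ 2 ^ S := by
    have h1 : Real.logb 2 (ε₀ / ε) ≤ (S : ℝ) := by rw [hScast]; exact Int.le_ceil _
    calc ε₀ / ε = (2 : ℝ) ^ Real.logb 2 (ε₀ / ε) :=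
          (Real.rpow_logb (by norm_num) (by norm_num) (by positivity)).symm
      _ ≤ (2 : ℝ) ^ (S : ℝ) := Real.rpow_le_rpow_of_exponent_le (by norm_num) h1
      _ = 2 ^ S := by rw [Real.rpow_natCast]
  have h2S_lt : (2 : ℝ) ^ S < 2 * (ε₀ / ε) := by
    have h1 : (S : ℝ) < Real.logb 2 (ε₀ / ε) + 1 := by rw [hScast]; exact Int.ceil_lt_add_one _
    calc (2 : ℝ) ^ S = (2 : ℝ) ^ (S : ℝ) := (Real.rpow_natCast 2 S).symm
      _ < (2 : ℝ) ^ (Real.logb 2 (ε₀ / ε) + 1) :=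
          Real.rpow_lt_rpow_of_exponent_lt (by norm_num) h1
      _ = 2 * (ε₀ / ε) := by
          rw [Real.rpow_add (by norm_num), Real.rpow_logb (by norm_num) (by norm_num)
            (by positivity), Real.rpow_one]
          ring
  have hupper : ε₀ / 2 ^ S ≤ ε := by
    rw [div_le_iff₀ (by positivity)]
    have := (div_le_iff₀ hεpos).1 h2S_ge
    linarith
  have hlower : ∀ s < S, ε / 2 < ε₀ / 2 ^ (s + 1) := by
    intro s hs
    have h1 : (2 : ℝ) ^ (s + 1) ≤ 2 ^ S := by
      apply pow_le_pow_right₀ (by norm_num); omega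
    have h2 : ε / 2 < ε₀ / 2 ^ S := by
      rw [lt_div_iff₀ (by positivity)]
      have hx1 : ε * (2 * (ε₀ / ε)) = 2 * ε₀ := by field_simp
      nlinarith [mul_lt_mul_of_pos_left h2S_lt hεpos]
    have h3 : ε₀ / 2 ^ S ≤ ε₀ / 2 ^ (s + 1) :=
      div_le_div_of_nonneg_left hε₀pos.le (by positivity) h1
    linarith
  -- lower bound on fhat at xstar
  have hstar_le : ∀ k, 1 ≤ k → f xstar ≤ fhat f x ξ L₁ α k xstar := by
    intro k hk
    refine le_fhat f x ξ L₁ α hk xstar (fun i hi => ?_)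
    have h1 := hlip (x i) (hx i)
    have h2 := (abs_le.1 (hξ i)).1
    have h3 : ‖x i - xstar‖ = ‖xstar - x i‖ := norm_sub_rev _ _
    nlinarith [mul_nonneg (sub_nonneg.2 hL₁) (norm_nonneg (xstar - x i))]
  have hbdd : ∀ k, 1 ≤ k → BddAbove ((fun y => fhat f x ξ L₁ α k y) '' D) := by
    intro k hk
    refine ⟨f (x 1) + ξ 1 + L₁ * Metric.diam D + α, ?_⟩
    rintro z ⟨y, hy, rfl⟩
    refine le_trans (fhat_le f x ξ L₁ α (i := 1) (Finset.mem_Icc.2 ⟨le_rfl, hk⟩) y) ?_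
    have hdiam : ‖x 1 - y‖ ≤ Metric.diam D := by
      rw [← dist_eq_norm]; exact Metric.dist_le_diam_of_mem hD.isBounded (hx 1) hy
    nlinarith
  have key : ∀ i j, 1 ≤ i → i < j → j ≤ n →
      f xstar - f (x i) - 3 * α ≤ L₁ * ‖x i - x j‖ := by
    intro i j hi hij hjn
    have hk1 : 1 ≤ j - 1 := by omega
    have hk2 : j - 1 < n := by omega
    have hsel' := hsel (j - 1) hk1 hk2
    have hjj : j - 1 + 1 = j := by omega
    rw [hjj] at hsel'
    have h1 : fhat f x ξ L₁ α (j - 1) xstar ≤ sSup ((fun y => fhat f x ξ L₁ α (j - 1) y) '' D) :=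
      le_csSup (hbdd _ hk1) ⟨xstar, hxstar, rfl⟩
    have h2 : fhat f x ξ L₁ α (j - 1) (x j) ≤ f (x i) + ξ i + L₁ * ‖x i - x j‖ + α :=
      fhat_le f x ξ L₁ α (i := i) (Finset.mem_Icc.2 ⟨hi, by omega⟩) (x j)
    have h3 := hstar_le (j - 1) hk1
    have h4 := (abs_le.1 (hξ i)).2
    linarith
  by_contra hcon
  push_neg at hcon
  have hΔlow : ∀ i ∈ Finset.Icc 1 n, ε < f xstar - f (x i) := by
    intro i hi
    have h1 := hargmax i hi
    have h2 := abs_le.1 (hξ i)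
    have h3 := abs_le.1 (hξ istar)
    linarith
  have hΔhigh : ∀ i : ℕ, f xstar - f (x i) ≤ ε₀ := by
    intro i
    have h1 := hlip (x i) (hx i)
    have h2 : ‖xstar - x i‖ ≤ Metric.diam D := by
      rw [← dist_eq_norm]; exact Metric.dist_le_diam_of_mem hD.isBounded hxstar (hx i)
    have h3 := mul_le_mul_of_nonneg_left h2 hL₀.le
    rw [hε₀]; linarith
  have hcover : ∀ i ∈ Finset.Icc 1 n, ∃ s < S,
      ε₀ / 2 ^ (s + 1) < f xstar - f (x i) ∧ f xstar - f (x i) ≤ ε₀ / 2 ^ s := by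
    intro i hi
    have ht1 : ε < f xstar - f (x i) := hΔlow i hi
    have ht2 : f xstar - f (x i) ≤ ε₀ := hΔhigh i
    have hexists : ∃ s, ε₀ / 2 ^ (s + 1) < f xstar - f (x i) := by
      refine ⟨S - 1, ?_⟩
      have hSS : S - 1 + 1 = S := by omega
      rw [hSS]; linarith
    set s := Nat.find hexists with hsdef
    have hs1 := Nat.find_spec hexists
    have hsle : s ≤ S - 1 := Nat.find_le (by
      have hSS : S - 1 + 1 = S := by omega
      rw [hSS]; linarith)
    refine ⟨s, by omega, hs1, ?_⟩
    rcases Nat.eq_zero_or_pos s with h0 | hpos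
    · rw [h0]; simpa using ht2
    · have hm := Nat.find_min hexists (show s - 1 < s by omega)
      push_neg at hm
      have hss : s - 1 + 1 = s := by omega
      rw [hss] at hm
      exact hm
  set T : ℕ → Finset ℕ := fun s => (Finset.Icc 1 n).filter
    (fun i => ε₀ / 2 ^ (s + 1) < f xstar - f (x i) ∧ f xstar - f (x i) ≤ ε₀ / 2 ^ s) with hT
  have hsub : Finset.Icc 1 n ⊆ (Finset.range S).biUnion T := by
    intro i hi
    obtain ⟨s, hsS, h1, h2⟩ := hcover i hi
    exact Finset.mem_biUnion.2 ⟨s, Finset.mem_range.2 hsS, Finset.mem_filter.2 ⟨hi, h1, h2⟩⟩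
  have hcount : n ≤ ∑ s ∈ Finset.range S, (T s).card :=
    calc n = (Finset.Icc 1 n).card := by rw [Nat.card_Icc]; omega
      _ ≤ ((Finset.range S).biUnion T).card := Finset.card_le_card hsub
      _ ≤ ∑ s ∈ Finset.range S, (T s).card := Finset.card_biUnion_le
  have hTcard : ∀ s ∈ Finset.range S, (T s).card ≤
      packingNum
        {z | z ∈ D ∧ ε₀ / 2 ^ (s + 1) < f xstar - f z ∧ f xstar - f z ≤ ε₀ / 2 ^ s}
        ((ε₀ / 2 ^ (s + 1) - 3 * α) / L₁) := by
    intro s hs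
    rw [Finset.mem_range] at hs
    have hrpos : 0 < (ε₀ / 2 ^ (s + 1) - 3 * α) / L₁ := by
      have := hlower s hs
      apply div_pos _ hL₁pos
      linarith
    have hbddpack := pack_bdd hD
      (A := {z | z ∈ D ∧ ε₀ / 2 ^ (s + 1) < f xstar - f z ∧ f xstar - f z ≤ ε₀ / 2 ^ s})
      (fun z hz => hz.1) hrpos
    refine le_csSup hbddpack ?_
    let e := (T s).orderIsoOfFin (rfl : (T s).card = (T s).card)
    have hmemT : ∀ a : Fin (T s).card, ((e a : ℕ) ∈ Finset.Icc 1 n ∧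
        (ε₀ / 2 ^ (s + 1) < f xstar - f (x (e a)) ∧ f xstar - f (x (e a)) ≤ ε₀ / 2 ^ s)) := by
      intro a
      exact Finset.mem_filter.1 (e a).2
    have main : ∀ a b : Fin (T s).card, a < b →
        (ε₀ / 2 ^ (s + 1) - 3 * α) / L₁ < ‖x (e a) - x (e b)‖ := by
      intro a b hab
      have hlt : (e a : ℕ) < (e b : ℕ) := by
        have := (e.strictMono hab)
        exact_mod_cast this
      obtain ⟨ha1, ha2, _⟩ := hmemT a
      obtain ⟨hb1, _, _⟩ := hmemT b
      rw [Finset.mem_Icc] at ha1 hb1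
      have hkey := key (e a) (e b) ha1.1 hlt hb1.2
      rw [div_lt_iff₀ hL₁pos]
      nlinarith
    refine ⟨fun a => x (e a), fun a => ?_, fun a b hab => ?_⟩
    · obtain ⟨_, h1, h2⟩ := hmemT a
      exact ⟨hx _, h1, h2⟩
    · rcases hab.lt_or_gt with h | h
      · exact main a b h
      · rw [norm_sub_rev]; exact main b a h
  have hfinal := Finset.sum_le_sum hTcard
  omega
end

section
/- For the ε-Piyavskii–Shubert algorithm (which stops at the first n with f̂*_n − f*_n ≤ ε, where f̂*_k = f̂_k(x_{k+1}) and f*_k = max_{i≤k}(f(x_i)+ξ_i)), any two distinct query points x_i, x_j with i, j ≤ n satisfy ‖x_i − x_j‖ > (ε − 3α)/L₁. Moreover, if i < j and x_i lies in the layer 𝒳_{(ε₀2^{−k−1}, ε₀2^{−k}]} for some 0 ≤ k ≤ ⌈log₂(ε₀/ε)⌉, then ‖x_i − x_j‖ > (ε₀2^{−k−1} − 3α)/L₁. -/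
/-- The best observed value after `k` observations: `f*_k = max_{1 ≤ i ≤ k} (f(x_i) + ξ_i)`. -/
noncomputable def fstar {E : Type*} [NormedAddCommGroup E]
    (f : E → ℝ) (x : ℕ → E) (ξ : ℕ → ℝ) (k : ℕ) : ℝ :=
  ⨆ i : (Finset.Icc 1 k : Finset ℕ), (f (x i) + ξ i)

/-- Separation of the query points of the ε-Piyavskii–Shubert algorithm: any two distinct
query points are more than `(ε − 3α)/L₁` apart, and if `x_i` lies in the dyadic layer
`𝒳_{(ε₀2^{−k−1}, ε₀2^{−k}]}` then every later query point is more than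
`(ε₀2^{−k−1} − 3α)/L₁` away from it. -/
theorem eps_piyavskii_separation
    {E : Type*} [NormedAddCommGroup E] [NormedSpace ℝ E]
    (D : Set E) (hD : IsCompact D)
    (f : E → ℝ) (xstar : E) (hxstar : xstar ∈ D)
    (hmax : ∀ z ∈ D, f z ≤ f xstar)
    (L₀ L₁ : ℝ) (hL₀ : 0 < L₀) (hL₁ : L₀ ≤ L₁)
    (hlip : ∀ z ∈ D, f xstar - L₀ * ‖xstar - z‖ ≤ f z)
    (ε₀ : ℝ) (hε₀ : ε₀ = L₀ * Metric.diam D)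
    (ε α : ℝ) (hε : ε ∈ Set.Ioo 0 ε₀) (hα : 0 ≤ α)
    (n : ℕ) (x : ℕ → E) (ξ : ℕ → ℝ)
    (hx : ∀ k, x k ∈ D) (hξ : ∀ k, |ξ k| ≤ α)
    (hsel : ∀ k, 1 ≤ k → k < n →
      sSup ((fun y => fhat f x ξ L₁ α k y) '' D) - α ≤ fhat f x ξ L₁ α k (x (k + 1)))
    (hrun : ∀ k, 1 ≤ k → k < n →
      ε < fhat f x ξ L₁ α k (x (k + 1)) - fstar f x ξ k) :
    (∀ i j, 1 ≤ i → i < j → j ≤ n → (ε - 3 * α) / L₁ < ‖x i - x j‖)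
    ∧ ∀ i j k, 1 ≤ i → i < j → j ≤ n → k ≤ ⌈Real.logb 2 (ε₀ / ε)⌉.toNat →
        ε₀ / 2 ^ (k + 1) < f xstar - f (x i) → f xstar - f (x i) ≤ ε₀ / 2 ^ k →
        (ε₀ / 2 ^ (k + 1) - 3 * α) / L₁ < ‖x i - x j‖ := by
  have hL₁pos : 0 < L₁ := lt_of_lt_of_le hL₀ hL₁
  -- basic facts about fhat/fstar
  have hfhat_le : ∀ m (i : ℕ), 1 ≤ i → i ≤ m → ∀ y,
      fhat f x ξ L₁ α m y ≤ f (x i) + ξ i + L₁ * ‖x i - y‖ + α := by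
    intro m i hi1 him y
    have hi : i ∈ Finset.Icc 1 m := Finset.mem_Icc.2 ⟨hi1, him⟩
    have := ciInf_le (f := fun p : (Finset.Icc 1 m : Finset ℕ) =>
        f (x p) + ξ p + L₁ * ‖x p - y‖ + α)
      (Set.Finite.bddBelow (Set.finite_range _)) ⟨i, hi⟩
    exact this
  have hle_fstar : ∀ m (i : ℕ), 1 ≤ i → i ≤ m →
      f (x i) + ξ i ≤ fstar f x ξ m := by
    intro m i hi1 him
    have hi : i ∈ Finset.Icc 1 m := Finset.mem_Icc.2 ⟨hi1, him⟩
    have := le_ciSup (f := fun p : (Finset.Icc 1 m : Finset ℕ) => f (x p) + ξ p)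
      (Set.Finite.bddAbove (Set.finite_range _)) ⟨i, hi⟩
    exact this
  have hstar_le : ∀ m, 1 ≤ m → f xstar ≤ fhat f x ξ L₁ α m xstar := by
    intro m hm
    have hne : Nonempty (Finset.Icc 1 m : Finset ℕ) :=
      ⟨⟨1, Finset.mem_Icc.2 ⟨le_refl 1, hm⟩⟩⟩
    unfold fhat
    refine le_ciInf fun i => ?_
    have h1 : f xstar - L₀ * ‖xstar - x i‖ ≤ f (x i) := hlip _ (hx i)
    have h2 : L₀ * ‖xstar - x (i : ℕ)‖ ≤ L₁ * ‖x (i : ℕ) - xstar‖ := by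
      rw [norm_sub_rev (x (i : ℕ))]
      exact mul_le_mul_of_nonneg_right hL₁ (norm_nonneg _)
    have h3 : -α ≤ ξ i := neg_le_of_abs_le (hξ i)
    nlinarith [norm_nonneg (x (i : ℕ) - xstar)]
  -- key bound for the second part
  have keyB : ∀ i j, 1 ≤ i → i < j → j ≤ n →
      f xstar - f (x i) - 3 * α ≤ L₁ * ‖x i - x j‖ := by
    intro i j hi1 hij hjn
    set m := j - 1 with hm
    have hm1 : 1 ≤ m := by omega
    have hmn : m < n := by omega
    have hj : j = m + 1 := by omega
    have hbdd : BddAbove ((fun y => fhat f x ξ L₁ α m y) '' D) := by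
      refine ⟨f (x 1) + ξ 1 + L₁ * Metric.diam D + α, ?_⟩
      rintro z ⟨y, hy, rfl⟩
      have h1 := hfhat_le m 1 le_rfl hm1 y
      have h2 : ‖x 1 - y‖ ≤ Metric.diam D := by
        rw [← dist_eq_norm]
        exact Metric.dist_le_diam_of_mem hD.isBounded (hx 1) hy
      nlinarith
    have h1 : f xstar ≤ sSup ((fun y => fhat f x ξ L₁ α m y) '' D) :=
      le_trans (hstar_le m hm1) (le_csSup hbdd ⟨xstar, hxstar, rfl⟩)
    have h2 := hsel m hm1 hmn
    have h3 := hfhat_le m i hi1 (by omega) (x (m + 1))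
    have h4 : ξ i ≤ α := le_of_abs_le (hξ i)
    rw [hj]
    linarith
  have keyA : ∀ i j, 1 ≤ i → i < j → j ≤ n →
      ε - α < L₁ * ‖x i - x j‖ := by
    intro i j hi1 hij hjn
    set m := j - 1 with hm
    have hm1 : 1 ≤ m := by omega
    have hmn : m < n := by omega
    have hj : j = m + 1 := by omega
    have h1 := hrun m hm1 hmn
    have h2 := hfhat_le m i hi1 (by omega) (x (m + 1))
    have h3 := hle_fstar m i hi1 (by omega)
    rw [hj]
    linarith
  constructor
  · intro i j hi1 hij hjn
    have h := keyA i j hi1 hij hjn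
    rw [div_lt_iff₀ hL₁pos]
    nlinarith
  · intro i j k hi1 hij hjn hk hlow hhigh
    have h := keyB i j hi1 hij hjn
    rw [div_lt_iff₀ hL₁pos]
    nlinarith
end

section
/- Assume f is L₀-Lipschitz around a maximizer x*, L₁ ≥ L₀, ε₀ = L₀ sup_{x,y∈D}‖x−y‖, ε ∈ (0, ε₀), and perturbation bound α ∈ [0, ε/12). Then the ε-Piyavskii–Shubert algorithm (stopping when f̂*_k − f*_k ≤ ε) stops after at most ñ' := 𝒩(𝒳_{ε/2}, (ε − 3α)/L₁) + Σ_{s=0}^{⌈log₂(ε₀/ε)⌉} 𝒩(𝒳_{(ε₀2^{−s−1}, ε₀2^{−s}]}, (ε₀2^{−s−1} − 3α)/L₁) iterations, and when it stops after n iterations its simple regret satisfies f(x*) − f(x*_n) ≤ ε + 2α. -/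
private lemma packing_card_le {E : Type*} [NormedAddCommGroup E] {D A : Set E}
    (hD : IsCompact D) (hA : A ⊆ D) {r : ℝ} (hr : 0 < r) {m : ℕ}
    (p : Fin m → E) (hp : ∀ i, p i ∈ A) (hsep : ∀ i j, i ≠ j → r < ‖p i - p j‖) :
    m ≤ packingNum A r := by
  classical
  obtain ⟨t, htf, htc⟩ := (Metric.totallyBounded_iff.mp hD.totallyBounded) (r/2) (by linarith)
  haveI := htf.fintype
  have key : ∀ k ∈ {k : ℕ | ∃ q : Fin k → E, (∀ i, q i ∈ A) ∧ ∀ i j, i ≠ j → r < ‖q i - q j‖},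
      k ≤ Fintype.card t := by
    rintro k ⟨q, hq, hqs⟩
    have hc : ∀ i : Fin k, ∃ y : t, q i ∈ Metric.ball (y : E) (r/2) := by
      intro i
      have := htc (hA (hq i))
      simp only [Set.mem_iUnion] at this
      obtain ⟨y, hy, hby⟩ := this
      exact ⟨⟨y, hy⟩, hby⟩
    choose g hg using hc
    have hinj : Function.Injective g := by
      intro i j hij
      by_contra hne
      have h1 := hg i
      have h2 := hg j
      rw [hij] at h1
      rw [Metric.mem_ball] at h1 h2
      have htri := dist_triangle (q i) (g j : E) (q j)
      rw [dist_comm (g j : E) (q j)] at htri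
      have hs := hqs i j hne
      rw [← dist_eq_norm] at hs
      linarith
    calc k = Fintype.card (Fin k) := (Fintype.card_fin k).symm
      _ ≤ Fintype.card t := Fintype.card_le_of_injective g hinj
  exact le_csSup ⟨Fintype.card t, key⟩ ⟨p, hp, hsep⟩

private lemma card_le_packingNum {E : Type*} [NormedAddCommGroup E] {D A : Set E}
    (hD : IsCompact D) (hA : A ⊆ D) {r : ℝ} (hr : 0 < r) (x : ℕ → E) (C : Finset ℕ)
    (hmem : ∀ i ∈ C, x i ∈ A)
    (hsep : ∀ i j, i ∈ C → j ∈ C → i < j → r < ‖x i - x j‖) :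
    C.card ≤ packingNum A r := by
  classical
  refine packing_card_le hD hA hr (fun j => x ((C.equivFin.symm j) : ℕ))
    (fun i => hmem _ (C.equivFin.symm i).2) ?_
  intro i j hij
  have hab : ((C.equivFin.symm i : ℕ)) ≠ ((C.equivFin.symm j : ℕ)) := by
    intro h
    exact hij (C.equivFin.symm.injective (Subtype.ext h))
  rcases lt_or_gt_of_ne hab with h | h
  · exact hsep _ _ (C.equivFin.symm i).2 (C.equivFin.symm j).2 h
  · have := hsep _ _ (C.equivFin.symm j).2 (C.equivFin.symm i).2 h
    rwa [norm_sub_rev] at this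

private lemma fhat_ge_opt {E : Type*} [NormedAddCommGroup E]
    (f : E → ℝ) (xstar : E) {D : Set E}
    {L₀ L₁ : ℝ} (hL₁ : L₀ ≤ L₁)
    (hlip : ∀ z ∈ D, f xstar - L₀ * ‖xstar - z‖ ≤ f z)
    {α : ℝ} (x : ℕ → E) (ξ : ℕ → ℝ) (hx : ∀ k, x k ∈ D) (hξ : ∀ k, |ξ k| ≤ α)
    (k : ℕ) (hk : 1 ≤ k) : f xstar ≤ fhat f x ξ L₁ α k xstar := by
  haveI : Nonempty (Finset.Icc 1 k : Finset ℕ) :=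
    ⟨⟨1, Finset.mem_Icc.mpr ⟨le_refl 1, hk⟩⟩⟩
  refine le_ciInf fun i => ?_
  have h1 := hlip (x i) (hx i)
  have h2 : -α ≤ ξ i := neg_le_of_abs_le (hξ i)
  have h3 : L₀ * ‖xstar - x (i : ℕ)‖ ≤ L₁ * ‖x (i : ℕ) - xstar‖ := by
    rw [norm_sub_rev (x (i : ℕ))]
    exact mul_le_mul_of_nonneg_right hL₁ (norm_nonneg _)
  linarith

private lemma fhat_bddAbove {E : Type*} [NormedAddCommGroup E]
    {D : Set E} (hD : IsCompact D)
    (f : E → ℝ) (L₁ α : ℝ) (x : ℕ → E) (ξ : ℕ → ℝ) (hx : ∀ k, x k ∈ D)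
    (k : ℕ) (hk : 1 ≤ k) :
    BddAbove ((fun y => fhat f x ξ L₁ α k y) '' D) := by
  have h1 : (1 : ℕ) ∈ Finset.Icc 1 k := Finset.mem_Icc.mpr ⟨le_refl 1, hk⟩
  refine ⟨f (x 1) + ξ 1 + |L₁| * Metric.diam D + α, ?_⟩
  rintro v ⟨y, hy, rfl⟩
  have hle : fhat f x ξ L₁ α k y ≤ f (x 1) + ξ 1 + L₁ * ‖x 1 - y‖ + α :=
    ciInf_le (Set.finite_range _).bddBelow (⟨1, h1⟩ : (Finset.Icc 1 k : Finset ℕ))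
  have hd : ‖x 1 - y‖ ≤ Metric.diam D := by
    rw [← dist_eq_norm]
    exact Metric.dist_le_diam_of_mem hD.isBounded (hx 1) hy
  have : L₁ * ‖x 1 - y‖ ≤ |L₁| * Metric.diam D := by
    calc L₁ * ‖x 1 - y‖ ≤ |L₁| * ‖x 1 - y‖ :=
          mul_le_mul_of_nonneg_right (le_abs_self _) (norm_nonneg _)
      _ ≤ |L₁| * Metric.diam D := mul_le_mul_of_nonneg_left hd (abs_nonneg _)
  linarith

/-- The ε-Piyavskii–Shubert algorithm (stopping when `f̂*_k − f*_k ≤ ε`) stops after at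
most `ñ' = 𝒩(𝒳_{ε/2}, (ε−3α)/L₁) + Σ_{s=0}^{⌈log₂(ε₀/ε)⌉} 𝒩(layer_s, (ε₀2^{−s−1}−3α)/L₁)`
iterations, and its simple regret at stopping satisfies `f(x*) − f(x*_n) ≤ ε + 2α`. -/
theorem eps_piyavskii_stopping
    {E : Type*} [NormedAddCommGroup E] [NormedSpace ℝ E]
    (D : Set E) (hD : IsCompact D)
    (f : E → ℝ) (xstar : E) (hxstar : xstar ∈ D)
    (hmax : ∀ z ∈ D, f z ≤ f xstar)
    (L₀ L₁ : ℝ) (hL₀ : 0 < L₀) (hL₁ : L₀ ≤ L₁)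
    (hlip : ∀ z ∈ D, f xstar - L₀ * ‖xstar - z‖ ≤ f z)
    (ε₀ : ℝ) (hε₀ : ε₀ = L₀ * Metric.diam D)
    (ε α : ℝ) (hε : ε ∈ Set.Ioo 0 ε₀) (hα : 0 ≤ α) (hαε : α < ε / 12)
    (n : ℕ) (hn1 : 1 ≤ n) (x : ℕ → E) (ξ : ℕ → ℝ)
    (hx : ∀ k, x k ∈ D) (hξ : ∀ k, |ξ k| ≤ α)
    (hsel : ∀ k, 1 ≤ k → k ≤ n →
      sSup ((fun y => fhat f x ξ L₁ α k y) '' D) - α ≤ fhat f x ξ L₁ α k (x (k + 1)))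
    (hrun : ∀ k, 1 ≤ k → k < n →
      ε < fhat f x ξ L₁ α k (x (k + 1)) - fstar f x ξ k)
    (hstop : fhat f x ξ L₁ α n (x (n + 1)) - fstar f x ξ n ≤ ε)
    (istar : ℕ) (histar : istar ∈ Finset.Icc 1 n)
    (hargmax : ∀ i ∈ Finset.Icc 1 n, f (x i) + ξ i ≤ f (x istar) + ξ istar) :
    n ≤ packingNum {z | z ∈ D ∧ f xstar - f z ≤ ε / 2} ((ε - 3 * α) / L₁)
        + ∑ s ∈ Finset.range (⌈Real.logb 2 (ε₀ / ε)⌉.toNat + 1),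
            packingNum
              {z | z ∈ D ∧ ε₀ / 2 ^ (s + 1) < f xstar - f z ∧ f xstar - f z ≤ ε₀ / 2 ^ s}
              ((ε₀ / 2 ^ (s + 1) - 3 * α) / L₁)
    ∧ f xstar - f (x istar) ≤ ε + 2 * α := by
  classical
  have hL₁pos : 0 < L₁ := lt_of_lt_of_le hL₀ hL₁
  have hεpos : 0 < ε := hε.1
  have hεε₀ : ε < ε₀ := hε.2
  have hε₀pos : 0 < ε₀ := lt_trans hεpos hεε₀
  set S := (⌈Real.logb 2 (ε₀ / ε)⌉).toNat with hSdef
  have hratio : (1:ℝ) < ε₀ / ε := (one_lt_div hεpos).mpr hεε₀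
  have hlogpos : 0 < Real.logb 2 (ε₀ / ε) := Real.logb_pos one_lt_two hratio
  -- 2^S sandwich
  have hSlb : ε₀ / ε ≤ 2 ^ S := by
    have h2 : ((⌈Real.logb 2 (ε₀ / ε)⌉ : ℤ) : ℝ) ≤ ((S : ℕ) : ℝ) := by
      exact_mod_cast Int.self_le_toNat _
    have h1 : Real.logb 2 (ε₀ / ε) ≤ (S : ℝ) := le_trans (Int.le_ceil _) h2
    calc ε₀ / ε = 2 ^ Real.logb 2 (ε₀ / ε) :=
          (Real.rpow_logb two_pos (by norm_num) (by positivity)).symm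
      _ ≤ 2 ^ ((S : ℕ) : ℝ) := (Real.rpow_le_rpow_left_iff one_lt_two).mpr h1
      _ = 2 ^ S := Real.rpow_natCast 2 S
  have hSub : (2:ℝ) ^ S ≤ 2 * (ε₀ / ε) := by
    have hceil : (0:ℤ) ≤ ⌈Real.logb 2 (ε₀ / ε)⌉ := (Int.ceil_pos.mpr hlogpos).le
    have hcast : ((S : ℕ) : ℤ) = ⌈Real.logb 2 (ε₀ / ε)⌉ := Int.toNat_of_nonneg hceil
    have h1 : ((S : ℕ) : ℝ) ≤ Real.logb 2 (ε₀ / ε) + 1 := by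
      have h2 : (((S : ℕ) : ℤ) : ℝ) = ((⌈Real.logb 2 (ε₀ / ε)⌉ : ℤ) : ℝ) := by
        exact_mod_cast hcast
      have h3 := Int.ceil_lt_add_one (Real.logb 2 (ε₀ / ε))
      push_cast at h2
      linarith
    calc (2:ℝ) ^ S = 2 ^ ((S : ℕ) : ℝ) := (Real.rpow_natCast 2 S).symm
      _ ≤ 2 ^ (Real.logb 2 (ε₀ / ε) + 1) := (Real.rpow_le_rpow_left_iff one_lt_two).mpr h1
      _ = 2 ^ Real.logb 2 (ε₀ / ε) * 2 := by
          rw [Real.rpow_add two_pos, Real.rpow_one]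
      _ = 2 * (ε₀ / ε) := by
          rw [Real.rpow_logb two_pos (by norm_num) (by positivity)]; ring
  have h2powS : (0:ℝ) < 2 ^ S := by positivity
  have hεlb : ε₀ ≤ ε * 2 ^ S := by
    rw [div_le_iff₀ hεpos] at hSlb; linarith [hSlb]
  have hεub : ε * 2 ^ S ≤ 2 * ε₀ := by
    have := mul_le_mul_of_nonneg_left hSub hεpos.le
    have heq : ε * (2 * (ε₀ / ε)) = 2 * ε₀ := by field_simp
    linarith [heq ▸ this]
  have hSd1 : ε₀ / 2 ^ (S + 1) ≤ ε / 2 := by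
    rw [pow_succ, div_le_div_iff₀ (by positivity) (by norm_num)]
    nlinarith
  have hSd2 : ε / 4 ≤ ε₀ / 2 ^ (S + 1) := by
    rw [pow_succ, div_le_div_iff₀ (by norm_num) (by positivity)]
    nlinarith
  -- basic proxy facts
  have hfhat_le : ∀ k i (y : E), 1 ≤ i → i ≤ k →
      fhat f x ξ L₁ α k y ≤ f (x i) + ξ i + L₁ * ‖x i - y‖ + α := by
    intro k i y h1 h2
    exact ciInf_le (Set.finite_range _).bddBelow
      (⟨i, Finset.mem_Icc.mpr ⟨h1, h2⟩⟩ : (Finset.Icc 1 k : Finset ℕ))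
  have hfstar_ge : ∀ k i, 1 ≤ i → i ≤ k → f (x i) + ξ i ≤ fstar f x ξ k := by
    intro k i h1 h2
    exact le_ciSup (f := fun i : (Finset.Icc 1 k : Finset ℕ) => f (x i) + ξ i)
      (Set.finite_range _).bddAbove
      (⟨i, Finset.mem_Icc.mpr ⟨h1, h2⟩⟩ : (Finset.Icc 1 k : Finset ℕ))
  have hkey : ∀ k, 1 ≤ k → k ≤ n → f xstar - α ≤ fhat f x ξ L₁ α k (x (k + 1)) := by
    intro k h1 h2
    have ha := hsel k h1 h2
    have hb : fhat f x ξ L₁ α k xstar ≤ sSup ((fun y => fhat f x ξ L₁ α k y) '' D) :=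
      le_csSup (fhat_bddAbove hD f L₁ α x ξ hx k h1) ⟨xstar, hxstar, rfl⟩
    have hc := fhat_ge_opt f xstar hL₁ hlip x ξ hx hξ k h1
    linarith
  -- separation lemmas
  have sep1 : ∀ i j, 1 ≤ i → i < j → j ≤ n → ε - α < L₁ * ‖x i - x j‖ := by
    intro i j h1 h2 h3
    obtain ⟨k, rfl⟩ : ∃ k, j = k + 1 := ⟨j - 1, by omega⟩
    have hr := hrun k (by omega) (by omega)
    have hle := hfhat_le k i (x (k + 1)) h1 (by omega)
    have hge := hfstar_ge k i h1 (by omega)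
    linarith
  have sep2 : ∀ i j, 1 ≤ i → i < j → j ≤ n →
      f xstar - f (x i) - 3 * α ≤ L₁ * ‖x i - x j‖ := by
    intro i j h1 h2 h3
    obtain ⟨k, rfl⟩ : ∃ k, j = k + 1 := ⟨j - 1, by omega⟩
    have hk := hkey k (by omega) (by omega)
    have hle := hfhat_le k i (x (k + 1)) h1 (by omega)
    have hξi : ξ i ≤ α := le_of_abs_le (hξ i)
    linarith
  -- regret bound
  have hreg : f xstar - f (x istar) ≤ ε + 2 * α := by
    have h1 := hkey n hn1 le_rfl
    haveI : Nonempty (Finset.Icc 1 n : Finset ℕ) :=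
      ⟨⟨1, Finset.mem_Icc.mpr ⟨le_refl 1, hn1⟩⟩⟩
    have h2 : fstar f x ξ n ≤ f (x istar) + ξ istar :=
      ciSup_le fun i => hargmax i i.2
    have h3 : ξ istar ≤ α := le_of_abs_le (hξ istar)
    linarith
  -- layer decomposition
  set T₀ : Finset ℕ := (Finset.Icc 1 n).filter (fun i => f xstar - f (x i) ≤ ε / 2) with hT₀def
  set Ts : ℕ → Finset ℕ := fun s => (Finset.Icc 1 n).filter
    (fun i => ε₀ / 2 ^ (s + 1) < f xstar - f (x i) ∧ f xstar - f (x i) ≤ ε₀ / 2 ^ s) with hTsdef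
  have hrub : ∀ i, f xstar - f (x i) ≤ ε₀ := by
    intro i
    have h1 := hlip (x i) (hx i)
    have h2 : ‖xstar - x i‖ ≤ Metric.diam D := by
      rw [← dist_eq_norm]
      exact Metric.dist_le_diam_of_mem hD.isBounded hxstar (hx i)
    have := mul_le_mul_of_nonneg_left h2 hL₀.le
    rw [hε₀]; linarith
  have hcover : Finset.Icc 1 n ⊆ T₀ ∪ (Finset.range (S + 1)).biUnion Ts := by
    intro i hi
    by_cases h0 : f xstar - f (x i) ≤ ε / 2
    · exact Finset.mem_union_left _ (Finset.mem_filter.mpr ⟨hi, h0⟩)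
    push_neg at h0
    have hex : ∃ s, ε₀ / 2 ^ (s + 1) < f xstar - f (x i) := ⟨S, lt_of_le_of_lt hSd1 h0⟩
    have hspec := Nat.find_spec hex
    have hsS : Nat.find hex ≤ S := Nat.find_min' hex (lt_of_le_of_lt hSd1 h0)
    have hub : f xstar - f (x i) ≤ ε₀ / 2 ^ (Nat.find hex) := by
      rcases Nat.eq_zero_or_pos (Nat.find hex) with h | h
      · rw [h]; simpa using hrub i
      · obtain ⟨t, ht⟩ : ∃ t, Nat.find hex = t + 1 := ⟨Nat.find hex - 1, by omega⟩
        have hmin := Nat.find_min hex (show t < Nat.find hex by omega)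
        rw [ht]
        exact not_lt.mp hmin
    exact Finset.mem_union_right _ (Finset.mem_biUnion.mpr
      ⟨Nat.find hex, Finset.mem_range.mpr (by omega),
        Finset.mem_filter.mpr ⟨hi, hspec, hub⟩⟩)
  have hcard : n ≤ T₀.card + ∑ s ∈ Finset.range (S + 1), (Ts s).card := by
    calc n = (Finset.Icc 1 n).card := by rw [Nat.card_Icc]; omega
      _ ≤ (T₀ ∪ (Finset.range (S + 1)).biUnion Ts).card := Finset.card_le_card hcover
      _ ≤ T₀.card + ((Finset.range (S + 1)).biUnion Ts).card := Finset.card_union_le _ _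
      _ ≤ T₀.card + ∑ s ∈ Finset.range (S + 1), (Ts s).card :=
          Nat.add_le_add_left Finset.card_biUnion_le _
  -- packing bounds
  have hT₀ : T₀.card ≤ packingNum {z | z ∈ D ∧ f xstar - f z ≤ ε / 2} ((ε - 3 * α) / L₁) := by
    refine card_le_packingNum hD (fun z hz => hz.1) (div_pos (by linarith) hL₁pos) x T₀ ?_ ?_
    · intro i hi
      exact ⟨hx i, (Finset.mem_filter.mp hi).2⟩
    · intro i j hi hj hij
      have hi' := Finset.mem_Icc.mp (Finset.mem_filter.mp hi).1
      have hj' := Finset.mem_Icc.mp (Finset.mem_filter.mp hj).1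
      have hs := sep1 i j hi'.1 hij hj'.2
      rw [div_lt_iff₀ hL₁pos]
      have hcomm : L₁ * ‖x i - x j‖ = ‖x i - x j‖ * L₁ := mul_comm _ _
      linarith
  have hTs : ∀ s ∈ Finset.range (S + 1), (Ts s).card ≤
      packingNum {z | z ∈ D ∧ ε₀ / 2 ^ (s + 1) < f xstar - f z ∧ f xstar - f z ≤ ε₀ / 2 ^ s}
        ((ε₀ / 2 ^ (s + 1) - 3 * α) / L₁) := by
    intro s hs
    have hsS : s ≤ S := by
      have := Finset.mem_range.mp hs; omega
    have hmono : (2:ℝ) ^ (s + 1) ≤ 2 ^ (S + 1) :=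
      pow_le_pow_right₀ (by norm_num) (by omega)
    have hlow : ε / 4 ≤ ε₀ / 2 ^ (s + 1) := by
      refine le_trans hSd2 ?_
      exact div_le_div_of_nonneg_left hε₀pos.le (by positivity) hmono
    refine card_le_packingNum hD (fun z hz => hz.1)
      (div_pos (by linarith) hL₁pos) x (Ts s) ?_ ?_
    · intro i hi
      exact ⟨hx i, (Finset.mem_filter.mp hi).2⟩
    · intro i j hi hj hij
      obtain ⟨hi1, hi2⟩ := Finset.mem_filter.mp hi
      obtain ⟨hj1, _⟩ := Finset.mem_filter.mp hj
      have hi' := Finset.mem_Icc.mp hi1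
      have hj' := Finset.mem_Icc.mp hj1
      have h2 := sep2 i j hi'.1 hij hj'.2
      rw [div_lt_iff₀ hL₁pos]
      have hcomm : L₁ * ‖x i - x j‖ = ‖x i - x j‖ * L₁ := mul_comm _ _
      linarith [hi2.1]
  exact ⟨le_trans hcard (add_le_add hT₀ (Finset.sum_le_sum hTs)), hreg⟩
end
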